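/- arXiv:1812.03059 — 3 statements merged into one kernel-verified Lean document; each statement's English description precedes it below -/
import Mathlib

section
/- Suppose U−L ≥ 4. Then the limit function α(x)=lim_{k→∞} α_k(x), defined for integers x with L ≤ x ≤ U, satisfies: α(U)=0; α(U−1)=q·α(U−2); α(U−2)=pq·α(U−2)+q·α(U−3); for every integer x with L+1 ≤ x ≤ U−3, α(x)=pq·α(x)+p·α(x+2)−pq·α(x+1)+q·α(x−1); and α(L)=1. Moreover α is the unique function on the integers of [L,U] satisfying this system of linear equations. -/
open MeasureTheory ProbabilityTheory Filter
open scoped ENNReal Classical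

noncomputable section

variable {Ω : Type*} [MeasurableSpace Ω]

/-- The `k`-th step of the ladder chain `L(2,2,p)` built from the driving
sequence `ξ` (indexed from 1): `X₁ = ±1` according to `ξ₁`, and for `k ≥ 2`,
`X_k = -1` if `ξ_k = -1`, `X_k = 2` if `ξ_k = ξ_{k-1} = 1`, and `X_k = 1`
if `ξ_k = 1, ξ_{k-1} = -1`. -/
def ladderX (ξ : ℕ → Ω → ℤ) (k : ℕ) (ω : Ω) : ℤ :=
  if k = 1 then (if ξ 1 ω = 1 then 1 else -1)
  else if ξ k ω = -1 then -1
  else if ξ (k - 1) ω = 1 then 2 else 1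

/-- The ladder chain `S_n = X₁ + ⋯ + X_n` (with `S_0 = 0`). -/
def ladderS (ξ : ℕ → Ω → ℤ) (n : ℕ) (ω : Ω) : ℤ :=
  ∑ k ∈ Finset.Icc 1 n, ladderX ξ k ω

/-- The truncated exit time `τ_k^x`: the least `l ≤ k` with `S_l^x ≤ L` or
`S_l^x ≥ U`, and `k` if there is no such `l`. -/
def ladderTau (ξ : ℕ → Ω → ℤ) (L U x : ℤ) (k : ℕ) (ω : Ω) : ℕ :=
  if ∃ l ≤ k, (x + ladderS ξ l ω ≤ L ∨ U ≤ x + ladderS ξ l ω)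
  then sInf {l | l ≤ k ∧ (x + ladderS ξ l ω ≤ L ∨ U ≤ x + ladderS ξ l ω)}
  else k

/-- The event `A_k^x`: the walk started at `x` exits through the lower
barrier `L` within the first `k` steps. -/
def ladderA (ξ : ℕ → Ω → ℤ) (L U x : ℤ) (k : ℕ) : Set Ω :=
  ⋃ l ∈ Finset.range (k + 1),
    {ω | ladderTau ξ L U x k ω = l ∧ x + ladderS ξ l ω ≤ L}

/-- The event `B_k^x`: the walk started at `x` exits through the upper
barrier `U` within the first `k` steps. -/
def ladderB (ξ : ℕ → Ω → ℤ) (L U x : ℤ) (k : ℕ) : Set Ω :=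
  ⋃ l ∈ Finset.range (k + 1),
    {ω | ladderTau ξ L U x k ω = l ∧ U ≤ x + ladderS ξ l ω}

/-- The linear difference system (6) of the paper for the lower-exit
probability `α`. -/
def alphaSystem (p q : ℝ) (L U : ℤ) (f : ℤ → ℝ) : Prop :=
  f U = 0 ∧
  f (U - 1) = q * f (U - 2) ∧
  f (U - 2) = p * q * f (U - 2) + q * f (U - 3) ∧
  (∀ x : ℤ, L + 1 ≤ x → x ≤ U - 3 →
    f x = p * q * f x + p * f (x + 2) - p * q * f (x + 1) + q * f (x - 1)) ∧
  f L = 1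


/-!
Conditioning on the first step, the probability of leaving `(L, U)` through the bottom within
`k` steps satisfies a recursion in `k` whose state is the current position together with the
direction of the last step; letting `k → ∞` and eliminating the "last step went up" state gives
the system. The recursion is read off a finite sum: `X_k` is a function of `ξ_{k-1}` and `ξ_k`,
so `P(A_k^x)` is a sum over sign words of length `k` weighted by products of `p` and `q`.

The difference `d` of two solutions solves the homogeneous system, whose equations, read
downward from `U`, give `d (U - j) = e_j · d (U - 2)` for a sequence `e_j` strictly increasing
from `e_0 = 0`. So `d L = 0` forces `d (U - 2) = 0`, hence `d = 0`.
-/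

open Finset Topology

section Walk

variable {L U x : ℤ} {S S' : ℕ → ℤ} {k : ℕ}

def ladderStep (prev cur : Bool) : ℤ := if cur then (if prev then 2 else 1) else -1

def bitWalk (s : ℕ → Bool) (n : ℕ) : ℤ := ∑ j ∈ range n, ladderStep (s j) (s (j + 1))

lemma bitWalk_zero (s : ℕ → Bool) : bitWalk s 0 = 0 := rfl

lemma bitWalk_succ (s : ℕ → Bool) (n : ℕ) :
    bitWalk s (n + 1) = ladderStep (s 0) (s 1) + bitWalk (fun j => s (j + 1)) n := by
  rw [bitWalk, sum_range_succ', add_comm]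
  rfl

def ExitsBelow (L U x : ℤ) (S : ℕ → ℤ) (k : ℕ) : Prop :=
  ∃ l ≤ k, x + S l ≤ L ∧ ∀ m < l, L < x + S m ∧ x + S m < U

lemma exitsBelow_congr (h : ∀ l ≤ k, S l = S' l) :
    ExitsBelow L U x S k ↔ ExitsBelow L U x S' k := by
  refine exists_congr fun l => and_congr_right fun hl => ?_
  have hS : ∀ m < l, S m = S' m := fun m hm => h m (by omega)
  rw [h l hl]
  exact and_congr_right fun _ => forall₂_congr fun m hm => by rw [hS m hm]

lemma exitsBelow_of_le (hS : S 0 = 0) (hx : x ≤ L) : ExitsBelow L U x S k :=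
  ⟨0, k.zero_le, by simpa [hS] using hx, fun _ h => absurd h (Nat.not_lt_zero _)⟩

lemma not_exitsBelow_of_ge (hS : S 0 = 0) (hLU : L < U) (hx : U ≤ x) :
    ¬ ExitsBelow L U x S k := by
  rintro ⟨_ | l, -, hl, hin⟩
  · rw [hS] at hl
    omega
  · have := (hin 0 l.succ_pos).2
    rw [hS] at this
    omega

lemma exitsBelow_succ_iff {d : ℤ} (hS : S 0 = 0) (hshift : ∀ l, S (l + 1) = d + S' l)
    (hL : L < x) (hU : x < U) :
    ExitsBelow L U x S (k + 1) ↔ ExitsBelow L U (x + d) S' k := by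
  constructor
  · rintro ⟨_ | l, hl, hlow, hin⟩
    · rw [hS] at hlow
      omega
    · refine ⟨l, by omega, by rw [add_assoc, ← hshift]; exact hlow, fun m hm => ?_⟩
      rw [add_assoc, ← hshift]
      exact hin (m + 1) (by omega)
  · rintro ⟨l, hl, hlow, hin⟩
    refine ⟨l + 1, by omega, by rw [hshift, ← add_assoc]; exact hlow, ?_⟩
    refine Nat.forall_lt_succ_left.2 ⟨by rw [hS, add_zero]; exact ⟨hL, hU⟩, fun m hm => ?_⟩
    rw [hshift, ← add_assoc]
    exact hin m hm

end Walk

section Words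

variable {k : ℕ}

def wordSeq (c : Bool) (t : Fin k → Bool) (n : ℕ) : Bool :=
  if h : n < k + 1 then (Fin.cons c t : Fin (k + 1) → Bool) ⟨n, h⟩ else false

@[simp] lemma wordSeq_zero (c : Bool) (t : Fin k → Bool) : wordSeq c t 0 = c := by
  simp [wordSeq]

lemma wordSeq_succ (c : Bool) (t : Fin k → Bool) (n : ℕ) (hn : n < k) :
    wordSeq c t (n + 1) = t ⟨n, hn⟩ := by
  rw [wordSeq, dif_pos (by omega)]
  exact Fin.cons_succ (α := fun _ => Bool) c t ⟨n, hn⟩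

lemma wordSeq_cons_shift (c b : Bool) (u : Fin k → Bool) :
    (fun n => wordSeq c (Fin.cons b u : Fin (k + 1) → Bool) (n + 1)) = wordSeq b u := by
  funext n
  by_cases hn : n < k + 1
  · rw [wordSeq_succ _ _ _ hn, wordSeq, dif_pos hn]
  · rw [wordSeq, dif_neg (by omega), wordSeq, dif_neg hn]

lemma sum_pi_fin_succ {α M : Type*} [Fintype α] [AddCommMonoid M] (f : (Fin (k + 1) → α) → M) :
    ∑ t, f t = ∑ b, ∑ u : Fin k → α, f (Fin.cons b u) := by
  rw [← (Fin.consEquiv fun _ => α).sum_comp, Fintype.sum_prod_type]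
  rfl

end Words

section ExitProbability

variable {p q : ℝ} {L U x : ℤ} {k : ℕ}

/-- `c` records whether the step before the first one went up, in which case an up step is `+2`. -/
def lowerExitProb (p q : ℝ) (L U : ℤ) (c : Bool) (k : ℕ) (x : ℤ) : ℝ :=
  ∑ t : Fin k → Bool, if ExitsBelow L U x (bitWalk (wordSeq c t)) k then ∏ i, cond (t i) p q else 0

lemma lowerExitProb_of_le (hpq : p + q = 1) (c : Bool) (hx : x ≤ L) :
    lowerExitProb p q L U c k x = 1 := by
  simp only [lowerExitProb, if_pos (exitsBelow_of_le (bitWalk_zero _) hx)]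
  rw [← Fintype.prod_sum fun (_ : Fin k) (b : Bool) => cond b p q]
  simp [hpq]

lemma lowerExitProb_of_ge (hLU : L < U) (c : Bool) (hx : U ≤ x) :
    lowerExitProb p q L U c k x = 0 := by
  simp [lowerExitProb, not_exitsBelow_of_ge (bitWalk_zero _) hLU hx]

lemma lowerExitProb_succ (c : Bool) (hL : L < x) (hU : x < U) :
    lowerExitProb p q L U c (k + 1) x =
      p * lowerExitProb p q L U true k (x + ladderStep c true) +
        q * lowerExitProb p q L U false k (x + ladderStep c false) := by
  have hevent : ∀ b (u : Fin k → Bool),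
      ExitsBelow L U x (bitWalk (wordSeq c (Fin.cons b u))) (k + 1) ↔
        ExitsBelow L U (x + ladderStep c b) (bitWalk (wordSeq b u)) k := by
    intro b u
    refine exitsBelow_succ_iff (bitWalk_zero _) (fun l => ?_) hL hU
    rw [bitWalk_succ, wordSeq_cons_shift, wordSeq_zero, wordSeq_succ _ _ 0 k.succ_pos]
    rfl
  simp only [lowerExitProb, sum_pi_fin_succ, hevent, Fin.prod_univ_succ, Fin.cons_zero,
    Fin.cons_succ, Fintype.sum_bool, cond_true, cond_false, mul_sum, mul_ite, mul_zero]

end ExitProbability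

section FiniteHorizon

variable {p q : ℝ} {L U x : ℤ} {k : ℕ}

lemma lowerExitProb_false_succ (hL : L < x) (hU : x < U) :
    lowerExitProb p q L U false (k + 1) x =
      p * lowerExitProb p q L U true k (x + 1) + q * lowerExitProb p q L U false k (x - 1) := by
  simpa [ladderStep, sub_eq_add_neg] using lowerExitProb_succ false hL hU

lemma lowerExitProb_true_succ (hL : L < x) (hU : x < U) :
    lowerExitProb p q L U true (k + 1) x =
      p * lowerExitProb p q L U true k (x + 2) + q * lowerExitProb p q L U false k (x - 1) := by
  simpa [ladderStep, sub_eq_add_neg] using lowerExitProb_succ true hL hU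

lemma lowerExitProb_U_sub_one (hLU : L + 2 ≤ U) :
    lowerExitProb p q L U false (k + 1) (U - 1) = q * lowerExitProb p q L U false k (U - 2) := by
  rw [lowerExitProb_false_succ (by omega) (by omega), sub_add_cancel,
    lowerExitProb_of_ge (by omega) _ le_rfl, sub_sub]
  norm_num

lemma lowerExitProb_U_sub_two (hLU : L + 3 ≤ U) :
    lowerExitProb p q L U false (k + 2) (U - 2) =
      p * q * lowerExitProb p q L U false k (U - 2) +
        q * lowerExitProb p q L U false (k + 1) (U - 3) := by
  rw [lowerExitProb_false_succ (by omega) (by omega), lowerExitProb_true_succ (by omega) (by omega),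
    lowerExitProb_of_ge (by omega) _ (by omega)]
  ring_nf

lemma lowerExitProb_interior (hL : L < x) (hU : x + 3 ≤ U) :
    lowerExitProb p q L U false (k + 2) x =
      p * q * lowerExitProb p q L U false k x + p * lowerExitProb p q L U false (k + 1) (x + 2) -
        p * q * lowerExitProb p q L U false k (x + 1) +
          q * lowerExitProb p q L U false (k + 1) (x - 1) := by
  rw [lowerExitProb_false_succ hL (by omega), lowerExitProb_true_succ (by omega) (by omega),
    lowerExitProb_false_succ (x := x + 2) (by omega) (by omega)]
  ring_nf

theorem alphaSystem_of_tendsto (hpq : p + q = 1) (hLU : L + 3 ≤ U) {a : ℤ → ℝ}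
    (ha : ∀ x, L ≤ x → x ≤ U →
      Tendsto (fun k => lowerExitProb p q L U false k x) atTop (𝓝 (a x))) :
    alphaSystem p q L U a := by
  have ha' : ∀ m x, L ≤ x → x ≤ U →
      Tendsto (fun k => lowerExitProb p q L U false (k + m) x) atTop (𝓝 (a x)) :=
    fun m x h₁ h₂ => (ha x h₁ h₂).comp (tendsto_add_atTop_nat m)
  refine ⟨?_, ?_, ?_, fun x h₁ h₂ => ?_, ?_⟩
  · exact tendsto_nhds_unique ((ha U (by omega) le_rfl).congr fun k =>
      lowerExitProb_of_ge (by omega) _ le_rfl) tendsto_const_nhds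
  · exact tendsto_nhds_unique (ha' 1 (U - 1) (by omega) (by omega))
      (((ha _ (by omega) (by omega)).const_mul q).congr fun k =>
        (lowerExitProb_U_sub_one (by omega)).symm)
  · exact tendsto_nhds_unique (ha' 2 (U - 2) (by omega) (by omega))
      ((((ha _ (by omega) (by omega)).const_mul (p * q)).add
        ((ha' 1 _ (by omega) (by omega)).const_mul q)).congr fun k =>
          (lowerExitProb_U_sub_two hLU).symm)
  · exact tendsto_nhds_unique (ha' 2 x (by omega) (by omega))
      (((((ha x (by omega) (by omega)).const_mul (p * q)).add
        ((ha' 1 (x + 2) (by omega) (by omega)).const_mul p)).sub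
          ((ha (x + 1) (by omega) (by omega)).const_mul (p * q))).add
            ((ha' 1 (x - 1) (by omega) (by omega)).const_mul q) |>.congr fun k =>
              (lowerExitProb_interior (by omega) (by omega)).symm)
  · exact tendsto_nhds_unique ((ha L le_rfl (by omega)).congr fun k =>
      lowerExitProb_of_le hpq _ le_rfl) tendsto_const_nhds

end FiniteHorizon

section Probability

set_option linter.unusedSectionVars false

variable {P : Measure Ω} {ξ : ℕ → Ω → ℤ} {p q : ℝ} {k : ℕ}

def signWord (ξ : ℕ → Ω → ℤ) (k : ℕ) (ω : Ω) : Fin k → Bool := fun i => decide (ξ (i + 1) ω = 1)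

lemma mem_ladderA_iff {L U x : ℤ} {ω : Ω} :
    ω ∈ ladderA ξ L U x k ↔ ExitsBelow L U x (fun l => ladderS ξ l ω) k := by
  set exits := {l | l ≤ k ∧ (x + ladderS ξ l ω ≤ L ∨ U ≤ x + ladderS ξ l ω)}
  simp only [ladderA, Set.mem_iUnion, mem_range, Set.mem_ofPred_eq, exists_prop]
  constructor
  · rintro ⟨l, hl, hτ, hlow⟩
    refine ⟨l, by omega, hlow, fun m hm => ?_⟩
    rw [ladderTau] at hτ
    split_ifs at hτ with hex
    · have : m ∉ exits := Nat.notMem_of_lt_sInf (hτ ▸ hm)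
      simp only [exits, Set.mem_ofPred_eq, not_and, not_or, not_le] at this
      exact this (by omega)
    · exact absurd ⟨l, by omega, Or.inl hlow⟩ hex
  · rintro ⟨l, hl, hlow, hin⟩
    dsimp only at hlow hin
    have hne : exits.Nonempty := ⟨l, hl, Or.inl hlow⟩
    have hτ : sInf exits = l := by
      refine le_antisymm (Nat.sInf_le ⟨hl, Or.inl hlow⟩) (not_lt.1 fun hlt => ?_)
      have := (Nat.sInf_mem hne).2
      have := hin _ hlt
      omega
    refine ⟨l, by omega, ?_, hlow⟩
    rw [ladderTau, if_pos ⟨l, hl, Or.inl hlow⟩]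
    exact hτ

lemma ladderS_eq_bitWalk {ω : Ω} (hval : ∀ n, ξ n ω = 1 ∨ ξ n ω = -1) {l : ℕ} (hl : l ≤ k) :
    ladderS ξ l ω = bitWalk (wordSeq false (signWord ξ k ω)) l := by
  rw [ladderS, ← Ico_add_one_right_eq_Icc, sum_Ico_eq_sum_range, Nat.add_sub_cancel, bitWalk]
  refine sum_congr rfl fun j hj => ?_
  rw [mem_range] at hj
  rw [wordSeq_succ _ _ j (by omega), signWord, add_comm 1 j]
  rcases j with _ | j
  · rcases hval 1 with h | h <;> simp [ladderX, ladderStep, h]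
  · rw [wordSeq_succ _ _ j (by omega)]
    rcases hval (j + 2) with h | h <;> rcases hval (j + 1) with h' | h' <;>
      simp [signWord, ladderX, ladderStep, h, h']

lemma ladderA_eq_preimage_signWord (hval : ∀ n ω, ξ n ω = 1 ∨ ξ n ω = -1) (L U x : ℤ) :
    ladderA ξ L U x k =
      signWord ξ k ⁻¹' {t | ExitsBelow L U x (bitWalk (wordSeq false t)) k} := by
  ext ω
  rw [mem_ladderA_iff]
  exact exitsBelow_congr fun l hl => ladderS_eq_bitWalk (hval · ω) hl

lemma measure_sign_preimage [IsProbabilityMeasure P] (hmeas : ∀ n, Measurable (ξ n))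
    (hprob : ∀ n, 1 ≤ n → P {ω | ξ n ω = 1} = ENNReal.ofReal p) (hq : q = 1 - p) (hp : 0 ≤ p)
    {n : ℕ} (hn : 1 ≤ n) (b : Bool) :
    P (ξ n ⁻¹' {z | decide (z = 1) = b}) = ENNReal.ofReal (cond b p q) := by
  cases b
  · have hset : ξ n ⁻¹' {z | decide (z = 1) = false} = {ω | ξ n ω = 1}ᶜ := by ext; simp
    rw [hset, prob_compl_eq_one_sub (s := {ω | ξ n ω = 1}) (hmeas n (measurableSet_singleton 1)),
      hprob n hn, cond_false, hq, ENNReal.ofReal_sub _ hp, ENNReal.ofReal_one]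
  · have hset : ξ n ⁻¹' {z | decide (z = 1) = true} = {ω | ξ n ω = 1} := by ext; simp
    rw [hset, hprob n hn, cond_true]

lemma measure_signWord_preimage_singleton [IsProbabilityMeasure P]
    (hmeas : ∀ n, Measurable (ξ n)) (hindep : iIndepFun ξ P)
    (hprob : ∀ n, 1 ≤ n → P {ω | ξ n ω = 1} = ENNReal.ofReal p) (hq : q = 1 - p) (hp : 0 ≤ p)
    (t : Fin k → Bool) :
    P (signWord ξ k ⁻¹' {t}) = ∏ i, ENNReal.ofReal (cond (t i) p q) := by
  have hset : signWord ξ k ⁻¹' {t} =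
      ⋂ i ∈ univ, (fun i : Fin k => ξ (i + 1)) i ⁻¹' {z | decide (z = 1) = t i} := by
    ext ω
    simp [signWord, funext_iff]
  have hindep' : iIndepFun (fun i : Fin k => ξ (i + 1)) P :=
    hindep.precomp fun i j h => Fin.ext (Nat.succ_injective h)
  rw [hset, hindep'.measure_inter_preimage_eq_mul _ fun _ _ => .of_discrete]
  exact prod_congr rfl fun i _ => measure_sign_preimage hmeas hprob hq hp (by omega) _

lemma measure_ladderA_toReal [IsProbabilityMeasure P]
    (hmeas : ∀ n, Measurable (ξ n)) (hindep : iIndepFun ξ P)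
    (hval : ∀ n ω, ξ n ω = 1 ∨ ξ n ω = -1)
    (hprob : ∀ n, 1 ≤ n → P {ω | ξ n ω = 1} = ENNReal.ofReal p) (hp : 0 ≤ p) (hp' : p ≤ 1)
    (hq : q = 1 - p) (L U x : ℤ) (k : ℕ) :
    (P (ladderA ξ L U x k)).toReal = lowerExitProb p q L U false k x := by
  have hword : Measurable (signWord ξ k) :=
    measurable_pi_lambda _ fun i =>
      (Measurable.of_discrete (f := fun z : ℤ => decide (z = 1))).comp (hmeas (i + 1))
  have hw : ∀ b, 0 ≤ cond b p q := by intro b; cases b <;> simp [hq, hp, hp']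
  rw [ladderA_eq_preimage_signWord hval, ← coe_filter_univ,
    ← sum_measure_preimage_singleton _ fun t _ => hword (measurableSet_singleton t),
    ENNReal.toReal_sum fun t _ => by
      rw [measure_signWord_preimage_singleton hmeas hindep hprob hq hp t]
      exact ENNReal.prod_ne_top fun _ _ => ENNReal.ofReal_ne_top, lowerExitProb, ← sum_filter]
  refine sum_congr rfl fun t _ => ?_
  rw [measure_signWord_preimage_singleton hmeas hindep hprob hq hp t, ENNReal.toReal_prod]
  exact prod_congr rfl fun i _ => ENNReal.toReal_ofReal (hw _)

end Probability

section Uniqueness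

variable {p q : ℝ}

/-- `alphaHomSol p q j` is the value at `U - j` of the solution of the homogeneous system
(all equations except `f L = 1`) normalised by `f (U - 2) = 1`. -/
def alphaHomSol (p q : ℝ) : ℕ → ℝ
  | 0 => 0
  | 1 => q
  | 2 => 1
  | 3 => (1 - p * q) / q
  | j + 4 => ((1 - p * q) * alphaHomSol p q (j + 3) + p * q * alphaHomSol p q (j + 2) -
      p * alphaHomSol p q (j + 1)) / q

lemma alphaHomSol_lt_succ (hp : 0 < p) (hq : 0 < q) (hpq : p + q = 1) (j : ℕ) :
    alphaHomSol p q j < alphaHomSol p q (j + 1) := by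
  induction j using Nat.strong_induction_on with
  | _ j ih =>
    match j with
    | 0 => exact hq
    | 1 => show q < 1; linarith
    | 2 =>
      show 1 < (1 - p * q) / q
      rw [lt_div_iff₀ hq]
      nlinarith
    | j + 3 =>
      have h₁ := ih (j + 1) (by omega)
      have h₂ := ih (j + 2) (by omega)
      obtain rfl : q = 1 - p := by linarith
      show alphaHomSol p (1 - p) (j + 3) < (_ - p * alphaHomSol p (1 - p) (j + 1)) / (1 - p)
      rw [lt_div_iff₀ hq]
      -- `q (e_{j+4} - e_{j+3}) = p² (e_{j+3} - e_{j+2}) + p (e_{j+2} - e_{j+1})`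
      nlinarith [mul_pos hp (mul_pos hp (sub_pos.2 h₂)), mul_pos hp (sub_pos.2 h₁)]

lemma alphaHomSol_pos (hp : 0 < p) (hq : 0 < q) (hpq : p + q = 1) {j : ℕ} (hj : 0 < j) :
    0 < alphaHomSol p q j :=
  (strictMono_nat_of_lt_succ (alphaHomSol_lt_succ hp hq hpq)).lt_iff_lt.2 hj

lemma eq_alphaHomSol_mul (hq : q ≠ 0) {u : ℕ → ℝ} {N : ℕ} (h₀ : u 0 = 0)
    (h₁ : u 1 = q * u 2) (h₂ : u 2 = p * q * u 2 + q * u 3)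
    (h : ∀ j, j + 4 ≤ N → u (j + 3) = p * q * u (j + 3) + p * u (j + 1) - p * q * u (j + 2) +
      q * u (j + 4)) :
    ∀ j ≤ N, u j = alphaHomSol p q j * u 2 := by
  intro j
  induction j using Nat.strong_induction_on with
  | _ j ih =>
    intro hj
    match j with
    | 0 => simp [alphaHomSol, h₀]
    | 1 => simp [alphaHomSol, h₁]
    | 2 => simp [alphaHomSol]
    | 3 =>
      simp only [alphaHomSol]
      field_simp
      linear_combination -h₂
    | j + 4 =>
      simp only [alphaHomSol]
      have hrec := h j hj
      rw [ih (j + 1) (by omega) (by omega), ih (j + 2) (by omega) (by omega),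
        ih (j + 3) (by omega) (by omega)] at hrec
      field_simp
      linear_combination -hrec

theorem alphaSystem_unique (hp : 0 < p) (hq : 0 < q) (hpq : p + q = 1) {L U : ℤ} (hLU : L < U)
    {f g : ℤ → ℝ} (hf : alphaSystem p q L U f) (hg : alphaSystem p q L U g) :
    ∀ x, L ≤ x → x ≤ U → f x = g x := by
  obtain ⟨hfU, hfU₁, hfU₂, hf, hfL⟩ := hf
  obtain ⟨hgU, hgU₁, hgU₂, hg, hgL⟩ := hg
  set u : ℕ → ℝ := fun j => f (U - j) - g (U - j)
  have hu : ∀ j ≤ (U - L).toNat, u j = alphaHomSol p q j * u 2 := by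
    refine eq_alphaHomSol_mul hq.ne' ?_ ?_ ?_ fun j hj => ?_
    · simp [u, hfU, hgU]
    · simp only [u, Nat.cast_one, Nat.cast_ofNat, hfU₁, hgU₁]; ring
    · simp only [u, Nat.cast_ofNat]
      linear_combination hfU₂ - hgU₂
    · have hx₁ : L + 1 ≤ U - (j + 3 : ℕ) := by omega
      have hx₂ : U - (j + 3 : ℕ) ≤ U - 3 := by omega
      have e₂ : U - ((j + 3 : ℕ) : ℤ) + 2 = U - (j + 1 : ℕ) := by push_cast; ring
      have e₁ : U - ((j + 3 : ℕ) : ℤ) + 1 = U - (j + 2 : ℕ) := by push_cast; ring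
      have e₀ : U - ((j + 3 : ℕ) : ℤ) - 1 = U - (j + 4 : ℕ) := by push_cast; ring
      have hfj := hf _ hx₁ hx₂
      have hgj := hg _ hx₁ hx₂
      rw [e₂, e₁, e₀] at hfj hgj
      simp only [u]
      linear_combination hfj - hgj
  have hN : ((U - L).toNat : ℤ) = U - L := Int.toNat_of_nonneg (by omega)
  have hu₂ : u 2 = 0 := by
    have h := hu _ le_rfl
    rw [show u (U - L).toNat = 0 by simp [u, hN, hfL, hgL], eq_comm, mul_eq_zero] at h
    exact h.resolve_left (alphaHomSol_pos hp hq hpq (by omega)).ne'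
  intro x hx₁ hx₂
  have h := hu (U - x).toNat (by omega)
  rw [hu₂, mul_zero] at h
  simp only [u, Int.toNat_of_nonneg (sub_nonneg.2 hx₂), sub_sub_cancel] at h
  linarith

end Uniqueness

/-- The limit `α(x) = lim_k α_k(x)` satisfies the linear
difference system (6), and is the unique solution of that system on the
integers of `[L, U]`. -/
theorem ladder_alpha_system_unique (p q : ℝ) (hp0 : 0 < p) (hp1 : p < 1) (hq : q = 1 - p)
    (P : Measure Ω) [IsProbabilityMeasure P]
    (ξ : ℕ → Ω → ℤ) (hmeas : ∀ n, Measurable (ξ n))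
    (hindep : iIndepFun ξ P)
    (hval : ∀ n ω, ξ n ω = 1 ∨ ξ n ω = -1)
    (hprob : ∀ n, 1 ≤ n → P {ω | ξ n ω = 1} = ENNReal.ofReal p)
    (L U : ℤ) (hLU : U - L ≥ 4)
    (a : ℤ → ℝ)
    (ha : ∀ x : ℤ, L ≤ x → x ≤ U →
      Tendsto (fun k => (P (ladderA ξ L U x k)).toReal) atTop (nhds (a x))) :
    alphaSystem p q L U a ∧
    ∀ b : ℤ → ℝ, alphaSystem p q L U b →
      ∀ x : ℤ, L ≤ x → x ≤ U → b x = a x := by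
  have hpq : p + q = 1 := by rw [hq]; ring
  have hα : alphaSystem p q L U a := by
    refine alphaSystem_of_tendsto hpq (by omega) fun x h₁ h₂ => ?_
    simpa only [measure_ladderA_toReal hmeas hindep hval hprob hp0.le hp1.le hq] using ha x h₁ h₂
  exact ⟨hα, fun b hb => alphaSystem_unique hp0 (by linarith) hpq (by omega) hb hα⟩

end
end

section
/- For any real numbers L<U and any real x with L ≤ x ≤ U (no integrality or gap assumption on L, U, x), the limits α(x)=lim_{k→∞} α_k(x) and β(x)=lim_{k→∞} β_k(x) exist, lie in [0,1], and satisfy α(x)+β(x)=1. -/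
open MeasureTheory ProbabilityTheory Filter
open scoped ENNReal Classical

noncomputable section

variable {Ω : Type*} [MeasurableSpace Ω]

/-- Real-barrier version of the truncated exit time `τ_k^x`. -/
def ladderTauR (ξ : ℕ → Ω → ℤ) (L U x : ℝ) (k : ℕ) (ω : Ω) : ℕ :=
  if ∃ l ≤ k, (x + (ladderS ξ l ω : ℝ) ≤ L ∨ U ≤ x + (ladderS ξ l ω : ℝ))
  then sInf {l | l ≤ k ∧ (x + (ladderS ξ l ω : ℝ) ≤ L ∨ U ≤ x + (ladderS ξ l ω : ℝ))}
  else k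

/-- Real-barrier version of the lower-exit event `A_k^x`. -/
def ladderAR (ξ : ℕ → Ω → ℤ) (L U x : ℝ) (k : ℕ) : Set Ω :=
  ⋃ l ∈ Finset.range (k + 1),
    {ω | ladderTauR ξ L U x k ω = l ∧ x + (ladderS ξ l ω : ℝ) ≤ L}

/-- Real-barrier version of the upper-exit event `B_k^x`. -/
def ladderBR (ξ : ℕ → Ω → ℤ) (L U x : ℝ) (k : ℕ) : Set Ω :=
  ⋃ l ∈ Finset.range (k + 1),
    {ω | ladderTauR ξ L U x k ω = l ∧ U ≤ x + (ladderS ξ l ω : ℝ)}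

end

/-!
A step with `ξ_k = 1` moves the ladder walk up by at least one, so a block of `N ≥ U - L`
consecutive indices on which `ξ = 1` forces the walk out of `(L, U)`. The blocks `(jN, jN + N]`
are disjoint, hence independent, and each consists of ones with probability `p ^ N > 0`; so the
walk stays in `(L, U)` up to time `mN` with probability at most `(1 - p ^ N) ^ m → 0`, i.e. it
exits almost surely. The events `A_k`, `B_k` increase to the disjoint events "the first exit is
below `L`" and "the first exit is above `U`", whose union is that almost sure exit; continuity
from below gives the limits and `α + β = 1`.
-/

open Set

section Path

variable {Ω : Type*} {ξ : ℕ → Ω → ℤ} {ω : Ω}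

lemma one_le_ladderX {k : ℕ} (h : ξ k ω = 1) : 1 ≤ ladderX ξ k ω := by
  unfold ladderX
  split_ifs <;> simp_all

lemma ladderS_sub_ladderS {a b : ℕ} (hab : a ≤ b) :
    ladderS ξ b ω - ladderS ξ a ω = ∑ i ∈ Finset.Ioc a b, ladderX ξ i ω := by
  have hIcc : ∀ n, Finset.Icc 1 n = Finset.Ioc 0 n := Finset.Icc_add_one_left_eq_Ioc 0
  rw [ladderS, ladderS, hIcc, hIcc, ← Finset.sum_Ioc_consecutive _ (Nat.zero_le a) hab,
    add_sub_cancel_left]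

lemma ladderS_add_le_of_forall_eq_one {a b : ℕ} (hab : a ≤ b)
    (h : ∀ i ∈ Finset.Ioc a b, ξ i ω = 1) : ladderS ξ a ω + (b - a : ℕ) ≤ ladderS ξ b ω := by
  have hsum : ((b - a : ℕ) : ℤ) ≤ ∑ i ∈ Finset.Ioc a b, ladderX ξ i ω := by
    simpa using Finset.card_nsmul_le_sum _ _ 1 fun i hi => one_le_ladderX (h i hi)
  linarith [ladderS_sub_ladderS (ξ := ξ) (ω := ω) hab]

end Path

section Exit

variable {Ω : Type*} (ξ : ℕ → Ω → ℤ) (L U x : ℝ)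

def ladderPath (l : ℕ) (ω : Ω) : ℝ := x + ladderS ξ l ω

def firstExitInto (T : Set ℝ) (l : ℕ) : Set Ω :=
  {ω | (∀ j < l, ladderPath ξ x j ω ∈ Ioo L U) ∧ ladderPath ξ x l ω ∈ T}

variable {ξ L U x}

lemma ladderTauR_eq_iff {ω : Ω} {k l : ℕ} (hlk : l ≤ k) (hl : ladderPath ξ x l ω ∉ Ioo L U) :
    ladderTauR ξ L U x k ω = l ↔ ∀ j < l, ladderPath ξ x j ω ∈ Ioo L U := by
  have hexit : ∀ j, ladderPath ξ x j ω ∉ Ioo L U ↔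
      (x + (ladderS ξ j ω : ℝ) ≤ L ∨ U ≤ x + (ladderS ξ j ω : ℝ)) := by
    simp only [ladderPath, mem_Ioo, not_and_or, not_lt, implies_true]
  have hl_mem : l ∈ {j | j ≤ k ∧ (x + (ladderS ξ j ω : ℝ) ≤ L ∨ U ≤ x + (ladderS ξ j ω : ℝ))} :=
    ⟨hlk, (hexit l).1 hl⟩
  have hne : Set.Nonempty _ := ⟨l, hl_mem⟩
  rw [ladderTauR, if_pos (show ∃ j ≤ k, _ from hne)]
  refine ⟨?_, fun h => le_antisymm (Nat.sInf_le hl_mem) (not_lt.1 fun hlt => ?_)⟩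
  · rintro rfl j hj
    by_contra hj'
    exact Nat.notMem_of_lt_sInf hj ⟨hj.le.trans hlk, (hexit j).1 hj'⟩
  · exact (hexit _).2 (Nat.sInf_mem hne).2 (h _ hlt)

lemma ladderTauR_eq_and_mem_iff {T : Set ℝ} (hT : T ⊆ (Ioo L U)ᶜ) {ω : Ω} {k l : ℕ}
    (hlk : l ≤ k) :
    (ladderTauR ξ L U x k ω = l ∧ ladderPath ξ x l ω ∈ T) ↔ ω ∈ firstExitInto ξ L U x T l :=
  ⟨fun ⟨hτ, hT'⟩ => ⟨(ladderTauR_eq_iff hlk (hT hT')).1 hτ, hT'⟩,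
    fun ⟨hin, hT'⟩ => ⟨(ladderTauR_eq_iff hlk (hT hT')).2 hin, hT'⟩⟩

lemma ladderAR_eq_accumulate (k : ℕ) :
    ladderAR ξ L U x k = accumulate (firstExitInto ξ L U x (Iic L)) k := by
  ext ω
  simp only [ladderAR, mem_accumulate, mem_iUnion, Finset.mem_range, Nat.lt_succ_iff,
    exists_prop]
  exact exists_congr fun l => and_congr_right fun hlk =>
    ladderTauR_eq_and_mem_iff (fun _ hy h => h.1.not_ge hy) hlk

lemma ladderBR_eq_accumulate (k : ℕ) :
    ladderBR ξ L U x k = accumulate (firstExitInto ξ L U x (Ici U)) k := by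
  ext ω
  simp only [ladderBR, mem_accumulate, mem_iUnion, Finset.mem_range, Nat.lt_succ_iff,
    exists_prop]
  exact exists_congr fun l => and_congr_right fun hlk =>
    ladderTauR_eq_and_mem_iff (fun _ hy h => h.2.not_ge hy) hlk

lemma disjoint_iUnion_firstExitInto {T₁ T₂ : Set ℝ} (hT₁ : T₁ ⊆ (Ioo L U)ᶜ)
    (hT₂ : T₂ ⊆ (Ioo L U)ᶜ) (hT : Disjoint T₁ T₂) :
    Disjoint (⋃ l, firstExitInto ξ L U x T₁ l) (⋃ l, firstExitInto ξ L U x T₂ l) := by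
  simp only [disjoint_iUnion_left, disjoint_iUnion_right]
  refine fun l₂ l₁ => Set.disjoint_left.2 fun ω ⟨hin₁, hl₁⟩ ⟨hin₂, hl₂⟩ => ?_
  rcases lt_trichotomy l₁ l₂ with hlt | rfl | hgt
  · exact hT₁ hl₁ (hin₂ l₁ hlt)
  · exact hT.ne_of_mem hl₁ hl₂ rfl
  · exact hT₂ hl₂ (hin₁ l₂ hgt)

lemma iUnion_firstExitInto_Iic_union_Ici :
    (⋃ l, firstExitInto ξ L U x (Iic L) l) ∪ (⋃ l, firstExitInto ξ L U x (Ici U) l) =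
      {ω | ∃ l, ladderPath ξ x l ω ∉ Ioo L U} := by
  ext ω
  simp only [firstExitInto, mem_union, mem_iUnion, mem_ofPred_eq, mem_Iic, mem_Ici]
  constructor
  · rintro (⟨l, -, hl⟩ | ⟨l, -, hl⟩)
    exacts [⟨l, fun h => h.1.not_ge hl⟩, ⟨l, fun h => h.2.not_ge hl⟩]
  · intro hexit
    have hfirst : ∀ j < Nat.find hexit, ladderPath ξ x j ω ∈ Ioo L U :=
      fun j hj => not_not.1 (Nat.find_min hexit hj)
    rcases not_and_or.1 (Nat.find_spec hexit) with hL | hU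
    · exact Or.inl ⟨_, hfirst, not_lt.1 hL⟩
    · exact Or.inr ⟨_, hfirst, not_lt.1 hU⟩

lemma exists_ladderPath_notMem_Ioo_of_forall_eq_one {ω : Ω} {a b : ℕ} (hab : a ≤ b)
    (hUL : U - L ≤ (b - a : ℕ))
    (h : ∀ i ∈ Finset.Ioc a b, ξ i ω = 1) : ∃ l, ladderPath ξ x l ω ∉ Ioo L U := by
  by_contra! hin
  have hrise : (ladderS ξ a ω : ℝ) + (b - a : ℕ) ≤ ladderS ξ b ω := by
    exact_mod_cast ladderS_add_le_of_forall_eq_one hab h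
  have ha := (hin a).1
  have hb := (hin b).2
  simp only [ladderPath] at ha hb
  linarith

end Exit

section Probability

variable {Ω : Type*} {ξ : ℕ → Ω → ℤ}

def allOnesOn (ξ : ℕ → Ω → ℤ) (I : Finset ℕ) : Set Ω := ⋂ i ∈ I, ξ i ⁻¹' {1}

lemma measurableSet_allOnesOn_iSup {I : Finset ℕ} {S : Set ℕ} (hIS : ↑I ⊆ S) :
    MeasurableSet[⨆ i ∈ S, MeasurableSpace.comap (ξ i) inferInstance] (allOnesOn ξ I) :=
  Finset.measurableSet_biInter I fun i hi =>
    le_iSup₂ (f := fun i (_ : i ∈ S) => MeasurableSpace.comap (ξ i) inferInstance) i (hIS hi) _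
      ⟨{1}, measurableSet_singleton 1, rfl⟩

variable [MeasurableSpace Ω]

lemma measurableSet_allOnesOn (hmeas : ∀ n, Measurable (ξ n)) (I : Finset ℕ) :
    MeasurableSet (allOnesOn ξ I) :=
  Finset.measurableSet_biInter I fun i _ => hmeas i (measurableSet_singleton 1)

lemma measurable_ladderX (hmeas : ∀ n, Measurable (ξ n)) (k : ℕ) : Measurable (ladderX ξ k) := by
  have hone : ∀ n, MeasurableSet {ω | ξ n ω = 1} := fun n => hmeas n (measurableSet_singleton 1)
  unfold ladderX
  split_ifs
  · exact Measurable.ite (hone 1) measurable_const measurable_const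
  · exact Measurable.ite (hmeas k (measurableSet_singleton (-1))) measurable_const
      (Measurable.ite (hone (k - 1)) measurable_const measurable_const)

lemma measurable_ladderPath (hmeas : ∀ n, Measurable (ξ n)) (x : ℝ) (l : ℕ) :
    Measurable (ladderPath ξ x l) := by
  have : Measurable (ladderS ξ l) :=
    Finset.measurable_sum _ fun k _ => measurable_ladderX hmeas k
  unfold ladderPath
  fun_prop

lemma measurableSet_firstExitInto (hmeas : ∀ n, Measurable (ξ n)) (L U x : ℝ) {T : Set ℝ}
    (hT : MeasurableSet T) (l : ℕ) : MeasurableSet (firstExitInto ξ L U x T l) := by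
  have hpath := measurable_ladderPath hmeas x
  simp only [firstExitInto, ofPred_and, ofPred_forall]
  exact (MeasurableSet.iInter fun j => MeasurableSet.iInter fun _ =>
    hpath j measurableSet_Ioo).inter (hpath l hT)

variable {P : Measure Ω} {r : ℝ≥0∞}

lemma measure_allOnesOn (hindep : iIndepFun ξ P) (hprob : ∀ n, 1 ≤ n → P {ω | ξ n ω = 1} = r)
    {I : Finset ℕ} (hI : ∀ i ∈ I, 1 ≤ i) : P (allOnesOn ξ I) = r ^ I.card := by
  rw [allOnesOn, hindep.meas_biInter fun i _ => ⟨{1}, measurableSet_singleton 1, rfl⟩,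
    ← Finset.prod_const]
  exact Finset.prod_congr rfl fun i hi => hprob i (hI i hi)

lemma measure_iInter_compl_allOnesOn_blocks [IsProbabilityMeasure P]
    (hmeas : ∀ n, Measurable (ξ n)) (hindep : iIndepFun ξ P)
    (hprob : ∀ n, 1 ≤ n → P {ω | ξ n ω = 1} = r) (N m : ℕ) :
    P (⋂ j ∈ Finset.range m, (allOnesOn ξ (Finset.Ioc (j * N) (j * N + N)))ᶜ) =
      (1 - r ^ N) ^ m := by
  induction m with
  | zero => simp
  | succ m ih =>
    have hblock_indep : Indep (⨆ i ∈ (Finset.Ioc (m * N) (m * N + N) : Set ℕ),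
        MeasurableSpace.comap (ξ i) inferInstance)
        (⨆ i ∈ Iic (m * N), MeasurableSpace.comap (ξ i) inferInstance) P :=
      indep_iSup_of_disjoint (fun i => (hmeas i).comap_le) hindep
        (Set.disjoint_left.2 fun i hi hi' => by simp_all; omega)
    have hpast : MeasurableSet[⨆ i ∈ Iic (m * N), MeasurableSpace.comap (ξ i) inferInstance]
        (⋂ j ∈ Finset.range m, (allOnesOn ξ (Finset.Ioc (j * N) (j * N + N)))ᶜ) :=
      Finset.measurableSet_biInter _ fun j hj => (measurableSet_allOnesOn_iSup
        fun i hi => by simp_all; nlinarith).compl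
    rw [Finset.range_add_one, Finset.set_biInter_insert,
      (Indep_iff _ _ P).1 hblock_indep _ _ (measurableSet_allOnesOn_iSup subset_rfl).compl hpast,
      ih, prob_compl_eq_one_sub (measurableSet_allOnesOn hmeas _),
      measure_allOnesOn hindep hprob fun i hi => by simp at hi; omega, Nat.card_Ioc,
      Nat.add_sub_cancel_left, pow_succ, mul_comm]

lemma ae_exists_ladderPath_notMem_Ioo [IsProbabilityMeasure P] (hmeas : ∀ n, Measurable (ξ n))
    (hindep : iIndepFun ξ P) (hprob : ∀ n, 1 ≤ n → P {ω | ξ n ω = 1} = r) (hr : r ≠ 0)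
    (L U x : ℝ) : ∀ᵐ ω ∂P, ∃ l, ladderPath ξ x l ω ∉ Ioo L U := by
  set N := ⌈U - L⌉₊
  have hstay : ∀ m, {ω | ¬∃ l, ladderPath ξ x l ω ∉ Ioo L U} ⊆
      ⋂ j ∈ Finset.range m, (allOnesOn ξ (Finset.Ioc (j * N) (j * N + N)))ᶜ :=
    fun m ω hω => mem_iInter₂.2 fun j _ hj => hω <|
      exists_ladderPath_notMem_Ioo_of_forall_eq_one (Nat.le_add_right _ _)
        (by simpa using Nat.le_ceil (U - L)) (by simpa [allOnesOn] using hj)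
  have hlt : 1 - r ^ N < 1 := ENNReal.sub_lt_self ENNReal.one_ne_top one_ne_zero (pow_ne_zero _ hr)
  rw [ae_iff]
  refine le_antisymm (ge_of_tendsto' (ENNReal.tendsto_pow_atTop_nhds_zero_of_lt_one hlt)
    fun m => ?_) bot_le
  exact (measure_mono (hstay m)).trans_eq
    (measure_iInter_compl_allOnesOn_blocks hmeas hindep hprob N m)

end Probability

variable {Ω : Type*} [MeasurableSpace Ω]

theorem ladder_alpha_add_beta_eq_one_real_general (p : ℝ) (hp0 : 0 < p)
    (P : Measure Ω) [IsProbabilityMeasure P]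
    (ξ : ℕ → Ω → ℤ) (hmeas : ∀ n, Measurable (ξ n))
    (hindep : iIndepFun ξ P)
    (hprob : ∀ n, 1 ≤ n → P {ω | ξ n ω = 1} = ENNReal.ofReal p)
    (L U x : ℝ) (hLU : L < U) :
    ∃ a b : ℝ, a ∈ Set.Icc (0 : ℝ) 1 ∧ b ∈ Set.Icc (0 : ℝ) 1 ∧
      Tendsto (fun k => (P (ladderAR ξ L U x k)).toReal) atTop (nhds a) ∧
      Tendsto (fun k => (P (ladderBR ξ L U x k)).toReal) atTop (nhds b) ∧
      a + b = 1 := by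
  set A := ⋃ l, firstExitInto ξ L U x (Iic L) l
  set B := ⋃ l, firstExitInto ξ L U x (Ici U) l
  have hA : Tendsto (fun k => P (ladderAR ξ L U x k)) atTop (nhds (P A)) := by
    simpa only [ladderAR_eq_accumulate] using tendsto_measure_iUnion_accumulate
  have hB : Tendsto (fun k => P (ladderBR ξ L U x k)) atTop (nhds (P B)) := by
    simpa only [ladderBR_eq_accumulate] using tendsto_measure_iUnion_accumulate
  have hmeasB : MeasurableSet B :=
    .iUnion (measurableSet_firstExitInto hmeas L U x measurableSet_Ici)
  have hexit : P (A ∪ B) = 1 := by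
    have hmeasA : MeasurableSet A :=
      .iUnion (measurableSet_firstExitInto hmeas L U x measurableSet_Iic)
    rw [← prob_compl_eq_zero_iff (hmeasA.union hmeasB), iUnion_firstExitInto_Iic_union_Ici]
    exact ae_iff.1 (ae_exists_ladderPath_notMem_Ioo hmeas hindep hprob
      (ENNReal.ofReal_pos.2 hp0).ne' L U x)
  have hdisj : Disjoint A B := disjoint_iUnion_firstExitInto (fun _ hy h => h.1.not_ge hy)
    (fun _ hy h => h.2.not_ge hy) (Iic_disjoint_Ici.2 hLU.not_ge)
  refine ⟨P.real A, P.real B, ⟨measureReal_nonneg, measureReal_le_one⟩,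
    ⟨measureReal_nonneg, measureReal_le_one⟩,
    (ENNReal.tendsto_toReal (measure_ne_top P A)).comp hA,
    (ENNReal.tendsto_toReal (measure_ne_top P B)).comp hB, ?_⟩
  rw [← measureReal_union hdisj hmeasB, measureReal_def, hexit, ENNReal.toReal_one]

/-- For arbitrary real barriers `L < U` and any real start
`x ∈ [L, U]`, the limits `α(x)` and `β(x)` exist, lie in `[0, 1]`, and sum
to `1`. -/
theorem ladder_alpha_add_beta_eq_one_real (p : ℝ) (hp0 : 0 < p) (hp1 : p < 1)
    (P : Measure Ω) [IsProbabilityMeasure P]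
    (ξ : ℕ → Ω → ℤ) (hmeas : ∀ n, Measurable (ξ n))
    (hindep : iIndepFun ξ P)
    (hval : ∀ n ω, ξ n ω = 1 ∨ ξ n ω = -1)
    (hprob : ∀ n, 1 ≤ n → P {ω | ξ n ω = 1} = ENNReal.ofReal p)
    (L U x : ℝ) (hLU : L < U) (hxL : L ≤ x) (hxU : x ≤ U) :
    ∃ a b : ℝ, a ∈ Set.Icc (0 : ℝ) 1 ∧ b ∈ Set.Icc (0 : ℝ) 1 ∧
      Tendsto (fun k => (P (ladderAR ξ L U x k)).toReal) atTop (nhds a) ∧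
      Tendsto (fun k => (P (ladderBR ξ L U x k)).toReal) atTop (nhds b) ∧
      a + b = 1 :=
  ladder_alpha_add_beta_eq_one_real_general p hp0 P ξ hmeas hindep hprob L U x hLU
end

section
/- For every k ≥ 2, β_k(U−1) = p + q·β_{k−1}(U−2), where U−L ≥ 4. -/
open MeasureTheory ProbabilityTheory Filter
open scoped ENNReal Classical

noncomputable section

variable {Ω : Type*} [MeasurableSpace Ω]

/-! Started at `U - 1`, the walk exits through the top at once if `ξ₁ = 1`. If `ξ₁ = -1` it
moves to `U - 2`, and since an increment following a down-step depends only on the current `ξ`,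
it continues as the ladder walk driven by the shifted sequence `(ξₙ₊₁)`. Whether that walk
exits through the top within `k - 1` steps is determined by `(ξ₂, …, ξₖ)`, which is independent
of `ξ₁` and, like `(ξ₁, …, ξₖ₋₁)`, has the product of the common marginals as its law. -/

section Pathwise

omit [MeasurableSpace Ω]

lemma ladderS_zero (ξ : ℕ → Ω → ℤ) (ω : Ω) : ladderS ξ 0 ω = 0 := by
  simp [ladderS]

lemma ladderS_succ (ξ : ℕ → Ω → ℤ) (n : ℕ) (ω : Ω) :
    ladderS ξ (n + 1) ω = ladderS ξ n ω + ladderX ξ (n + 1) ω := by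
  rw [ladderS, ladderS, Finset.sum_Icc_succ_top (by omega)]

section ExitTime

variable (ξ : ℕ → Ω → ℤ) (L U x : ℤ) {k : ℕ} (ω : Ω)

lemma ladderTau_eq_of_isLeast {l : ℕ} (hl : l ≤ k)
    (hexit : x + ladderS ξ l ω ≤ L ∨ U ≤ x + ladderS ξ l ω)
    (hbefore : ∀ j < l, ¬(x + ladderS ξ j ω ≤ L ∨ U ≤ x + ladderS ξ j ω)) :
    ladderTau ξ L U x k ω = l := by
  rw [ladderTau, if_pos ⟨l, hl, hexit⟩]
  exact IsLeast.csInf_eq ⟨⟨hl, hexit⟩, fun j hj => not_lt.1 fun hjl => hbefore j hjl hj.2⟩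

lemma not_exit_of_lt_ladderTau {j : ℕ} (hj : j < ladderTau ξ L U x k ω) :
    ¬(x + ladderS ξ j ω ≤ L ∨ U ≤ x + ladderS ξ j ω) := by
  intro hexit
  unfold ladderTau at hj
  split_ifs at hj with h
  · obtain ⟨l, hl, hlexit⟩ := h
    have hne : {l | l ≤ k ∧ (x + ladderS ξ l ω ≤ L ∨ U ≤ x + ladderS ξ l ω)}.Nonempty :=
      ⟨l, hl, hlexit⟩
    exact Nat.notMem_of_lt_sInf hj ⟨hj.le.trans (Nat.sInf_mem hne).1, hexit⟩
  · exact h ⟨j, hj.le, hexit⟩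

lemma mem_ladderB_iff :
    ω ∈ ladderB ξ L U x k ↔ ∃ l ≤ k, U ≤ x + ladderS ξ l ω ∧
      ∀ j < l, L < x + ladderS ξ j ω ∧ x + ladderS ξ j ω < U := by
  simp only [ladderB, Set.mem_iUnion, Finset.mem_range, Set.mem_ofPred_eq, exists_prop]
  constructor
  · rintro ⟨l, hl, rfl, hU⟩
    refine ⟨_, Nat.lt_succ_iff.1 hl, hU, fun j hj => ?_⟩
    have := not_exit_of_lt_ladderTau ξ L U x ω hj
    omega
  · rintro ⟨l, hl, hU, hinside⟩
    refine ⟨l, Nat.lt_succ_iff.2 hl, ladderTau_eq_of_isLeast ξ L U x ω hl (.inr hU) ?_, hU⟩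
    intro j hj
    have := hinside j hj
    omega

end ExitTime

variable {ξ η : ℕ → Ω → ℤ} {L U x : ℤ} {ω : Ω}

lemma mem_ladderB_congr {Ω' : Type*} {ζ : ℕ → Ω' → ℤ} {ν : Ω'} {k : ℕ}
    (h : ∀ l ≤ k, ladderS ξ l ω = ladderS ζ l ν) :
    ω ∈ ladderB ξ L U x k ↔ ν ∈ ladderB ζ L U x k := by
  simp only [mem_ladderB_iff]
  refine exists_congr fun l => and_congr_right fun hl => ?_
  rw [h l hl]
  exact and_congr_right' (forall₂_congr fun j hj => by rw [h j (by omega)])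

lemma ladderS_congr {Ω' : Type*} {ζ : ℕ → Ω' → ℤ} {ν : Ω'} {m : ℕ}
    (h : ∀ n, 1 ≤ n → n ≤ m → ξ n ω = ζ n ν) {l : ℕ} (hl : l ≤ m) :
    ladderS ξ l ω = ladderS ζ l ν := by
  refine Finset.sum_congr rfl fun n hn => ?_
  obtain ⟨hn1, hnl⟩ := Finset.mem_Icc.1 hn
  rcases eq_or_ne n 1 with rfl | hn
  · simp [ladderX, h 1 le_rfl (hnl.trans hl)]
  · rw [ladderX, ladderX, if_neg hn, if_neg hn, h n hn1 (hnl.trans hl),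
      h (n - 1) (by omega) (by omega)]

lemma mem_ladderB_succ_iff {k : ℕ} (hx : L < x ∧ x < U) (d : ℤ)
    (hS : ∀ l, ladderS ξ (l + 1) ω = d + ladderS η l ω) :
    ω ∈ ladderB ξ L U x (k + 1) ↔ ω ∈ ladderB η L U (x + d) k := by
  simp only [mem_ladderB_iff]
  constructor
  · rintro ⟨_ | l, hl, hU, hinside⟩
    · rw [ladderS_zero] at hU; omega
    · refine ⟨l, by omega, by rw [hS] at hU; omega, fun j hj => ?_⟩
      have := hinside (j + 1) (by omega)
      rw [hS] at this
      omega
  · rintro ⟨l, hl, hU, hinside⟩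
    refine ⟨l + 1, by omega, by rw [hS]; omega, fun j hj => ?_⟩
    rcases j with _ | j
    · rw [ladderS_zero]; omega
    · have := hinside j (by omega)
      rw [hS]
      omega

lemma mem_ladderB_succ_of_exit_one {k : ℕ} (hx : L < x ∧ x < U)
    (hU : U ≤ x + ladderS ξ 1 ω) : ω ∈ ladderB ξ L U x (k + 1) := by
  refine (mem_ladderB_iff ξ L U x ω).2 ⟨1, by omega, hU, fun j hj => ?_⟩
  obtain rfl : j = 0 := by omega
  rw [ladderS_zero]
  omega

/-- After a down-step the increment at step `2` depends on `ξ₂` alone, exactly as the first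
increment of the shifted sequence does. -/
lemma ladderX_shift_of_first_eq_neg_one (h1 : ξ 1 ω = -1) (h2 : ξ 2 ω = 1 ∨ ξ 2 ω = -1)
    {j : ℕ} (hj : 1 ≤ j) : ladderX (fun n => ξ (n + 1)) j ω = ladderX ξ (j + 1) ω := by
  rcases eq_or_ne j 1 with rfl | hj1
  · rcases h2 with h2 | h2 <;> simp [ladderX, h1, h2]
  · simp only [ladderX, if_neg hj1, Nat.add_sub_cancel, Nat.sub_add_cancel hj,
      show j + 1 ≠ 1 by omega, if_false]

lemma ladderS_succ_of_first_eq_neg_one (h1 : ξ 1 ω = -1) (h2 : ξ 2 ω = 1 ∨ ξ 2 ω = -1)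
    (l : ℕ) : ladderS ξ (l + 1) ω = -1 + ladderS (fun n => ξ (n + 1)) l ω := by
  induction l with
  | zero => simp [ladderS, ladderX, h1]
  | succ l ih =>
    rw [ladderS_succ, ih, ladderS_succ,
      ladderX_shift_of_first_eq_neg_one h1 h2 (by omega : 1 ≤ l + 1)]
    ring

lemma ladderB_top_split (hval : ∀ n ω, ξ n ω = 1 ∨ ξ n ω = -1) (hL : L < U - 1) (m : ℕ) :
    ladderB ξ L U (U - 1) (m + 1) =
      ξ 1 ⁻¹' {1} ∪ (ξ 1 ⁻¹' {-1} ∩ ladderB (fun n => ξ (n + 1)) L U (U - 2) m) := by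
  ext ω
  have hx : L < U - 1 ∧ U - 1 < U := ⟨hL, by omega⟩
  rcases hval 1 ω with h1 | h1
  · simp only [Set.mem_union, Set.mem_preimage, h1, Set.mem_singleton_iff, true_or, iff_true]
    exact mem_ladderB_succ_of_exit_one hx (by simp [ladderS, ladderX, h1])
  · simp only [Set.mem_union, Set.mem_inter_iff, Set.mem_preimage, h1, Set.mem_singleton_iff,
      true_and]
    rw [mem_ladderB_succ_iff hx (-1) (ladderS_succ_of_first_eq_neg_one h1 (hval 2 ω)),
      show U - 1 + -1 = U - 2 by ring]
    simp

def initialWindow {β : Type*} (ξ : ℕ → Ω → β) (m : ℕ) (ω : Ω) : Fin m → β :=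
  fun i => ξ (i + 1) ω

lemma tail_initialWindow {β : Type*} (ξ : ℕ → Ω → β) (m : ℕ) (ω : Ω) :
    Fin.tail (initialWindow ξ (m + 1) ω) = initialWindow (fun n => ξ (n + 1)) m ω :=
  rfl

/-- Reads a vector as a driving sequence on the indices `1, …, m`, so that `ladderB` events
become preimages of subsets of `Fin m → ℤ` under `initialWindow`. -/
def coordSeq (m n : ℕ) (v : Fin m → ℤ) : ℤ := if h : n - 1 < m then v ⟨n - 1, h⟩ else 0

lemma ladderB_eq_preimage_initialWindow (ξ : ℕ → Ω → ℤ) (L U x : ℤ) (m : ℕ) :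
    ladderB ξ L U x m = initialWindow ξ m ⁻¹' ladderB (coordSeq m) L U x m := by
  ext ω
  refine mem_ladderB_congr fun l hl => ladderS_congr (fun n hn1 hnm => ?_) hl
  simp only [coordSeq, initialWindow, show n - 1 < m by omega, dite_true, Nat.sub_add_cancel hn1]

end Pathwise

section SignValued

variable {P : Measure Ω} [IsProbabilityMeasure P] {f g : Ω → ℤ}

lemma measure_preimage_neg_one (hf : Measurable f) (hval : ∀ ω, f ω = 1 ∨ f ω = -1) :
    P (f ⁻¹' {-1}) = 1 - P (f ⁻¹' {1}) := by
  have hcompl : f ⁻¹' {-1} = (f ⁻¹' {1})ᶜ := by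
    ext ω
    rcases hval ω with h | h <;> simp [h]
  rw [hcompl, prob_compl_eq_one_sub (hf (measurableSet_singleton 1))]

lemma map_eq_map_of_measure_preimage_one (hf : Measurable f) (hg : Measurable g)
    (hfval : ∀ ω, f ω = 1 ∨ f ω = -1) (hgval : ∀ ω, g ω = 1 ∨ g ω = -1)
    (h : P (f ⁻¹' {1}) = P (g ⁻¹' {1})) : P.map f = P.map g := by
  refine Measure.ext_of_singleton fun z => ?_
  rw [Measure.map_apply hf (measurableSet_singleton z),
    Measure.map_apply hg (measurableSet_singleton z)]
  by_cases h1 : z = 1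
  · rwa [h1]
  by_cases h2 : z = -1
  · rw [h2, measure_preimage_neg_one hf hfval, measure_preimage_neg_one hg hgval, h]
  have hempty : ∀ {f : Ω → ℤ}, (∀ ω, f ω = 1 ∨ f ω = -1) → f ⁻¹' {z} = ∅ := fun hval => by
    ext ω
    rcases hval ω with h | h <;> simp [h, Ne.symm h1, Ne.symm h2]
  rw [hempty hfval, hempty hgval]

end SignValued

section Window

variable {β : Type*} [MeasurableSpace β] {P : Measure Ω} [IsProbabilityMeasure P]
  {ξ : ℕ → Ω → β}

lemma measurable_initialWindow (hmeas : ∀ n, Measurable (ξ n)) (m : ℕ) :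
    Measurable (initialWindow ξ m) :=
  measurable_pi_lambda _ fun i => hmeas (i + 1)

lemma map_initialWindow (hmeas : ∀ n, Measurable (ξ n)) (hindep : iIndepFun ξ P)
    (hident : ∀ n, P.map (ξ (n + 1)) = P.map (ξ 1)) (m : ℕ) :
    P.map (initialWindow ξ m) = Measure.pi fun _ => P.map (ξ 1) := by
  have hinj : Function.Injective fun i : Fin m => (i : ℕ) + 1 := fun i j h =>
    Fin.ext (by simpa using h)
  change P.map (fun ω (i : Fin m) => ξ (i + 1) ω) = _
  rw [(iIndepFun_iff_map_fun_eq_pi_map fun i => (hmeas _).aemeasurable).1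
    (hindep.precomp hinj)]
  simp only [hident]

lemma measure_inter_preimage_initialWindow_shift (hmeas : ∀ n, Measurable (ξ n))
    (hindep : iIndepFun ξ P) (hident : ∀ n, P.map (ξ (n + 1)) = P.map (ξ 1)) {m : ℕ}
    {S : Set β} (hS : MeasurableSet S) {V : Set (Fin m → β)} (hV : MeasurableSet V) :
    P (ξ 1 ⁻¹' S ∩ initialWindow (fun n => ξ (n + 1)) m ⁻¹' V)
      = P (ξ 1 ⁻¹' S) * P (initialWindow ξ m ⁻¹' V) := by
  have : IsProbabilityMeasure (P.map (ξ 1)) :=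
    Measure.isProbabilityMeasure_map (hmeas 1).aemeasurable
  have hsplit := measurePreserving_piFinSuccAbove (fun _ : Fin (m + 1) => P.map (ξ 1)) 0
  have hset : ξ 1 ⁻¹' S ∩ initialWindow (fun n => ξ (n + 1)) m ⁻¹' V
      = initialWindow ξ (m + 1) ⁻¹' (MeasurableEquiv.piFinSuccAbove _ 0 ⁻¹' S ×ˢ V) := by
    ext ω
    simp [initialWindow, tail_initialWindow, MeasurableEquiv.piFinSuccAbove_apply]
  rw [hset, ← Measure.map_apply (measurable_initialWindow hmeas _)
      (hsplit.measurable (hS.prod hV)), map_initialWindow hmeas hindep hident,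
    hsplit.measure_preimage (hS.prod hV).nullMeasurableSet, Measure.prod_prod,
    ← map_initialWindow hmeas hindep hident, Measure.map_apply (hmeas 1) hS,
    Measure.map_apply (measurable_initialWindow hmeas _) hV]

end Window

/-- For `k ≥ 2`, `β_k(U-1) = p + q·β_(k-1)(U-2)`. -/
theorem ladder_betak_rec_top (p q : ℝ) (hp0 : 0 < p) (hp1 : p < 1) (hq : q = 1 - p)
    (P : Measure Ω) [IsProbabilityMeasure P]
    (ξ : ℕ → Ω → ℤ) (hmeas : ∀ n, Measurable (ξ n))
    (hindep : iIndepFun ξ P)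
    (hval : ∀ n ω, ξ n ω = 1 ∨ ξ n ω = -1)
    (hprob : ∀ n, 1 ≤ n → P {ω | ξ n ω = 1} = ENNReal.ofReal p)
    (L U : ℤ) (hLU : U - L ≥ 4) (k : ℕ) (hk : 2 ≤ k) :
    (P (ladderB ξ L U (U - 1) k)).toReal
      = p + q * (P (ladderB ξ L U (U - 2) (k - 1))).toReal := by
  obtain ⟨m, rfl⟩ : ∃ m, k = m + 1 := ⟨k - 1, by omega⟩
  have hident : ∀ n, P.map (ξ (n + 1)) = P.map (ξ 1) := fun n =>
    map_eq_map_of_measure_preimage_one (hmeas _) (hmeas 1) (hval _) (hval 1)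
      ((hprob (n + 1) (by omega)).trans (hprob 1 le_rfl).symm)
  have hup : P (ξ 1 ⁻¹' {1}) = ENNReal.ofReal p := hprob 1 le_rfl
  have hdown : P (ξ 1 ⁻¹' {-1}) = ENNReal.ofReal q := by
    rw [measure_preimage_neg_one (hmeas 1) (hval 1), hup, hq,
      ENNReal.ofReal_sub _ hp0.le, ENNReal.ofReal_one]
  set V := ladderB (coordSeq m) L U (U - 2) m
  have hV : MeasurableSet V := (Set.to_countable V).measurableSet
  rw [Nat.add_sub_cancel, ladderB_top_split hval (by omega) m,
    ladderB_eq_preimage_initialWindow ξ, ladderB_eq_preimage_initialWindow (fun n => ξ (n + 1)),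
    measure_union (Set.disjoint_left.2 fun ω h1 h2 => by simp_all)
      ((hmeas 1 (measurableSet_singleton _)).inter
        (measurable_initialWindow (fun n => hmeas (n + 1)) m hV)),
    measure_inter_preimage_initialWindow_shift hmeas hindep hident (measurableSet_singleton _) hV,
    hup, hdown, ENNReal.toReal_add ENNReal.ofReal_ne_top
      (ENNReal.mul_ne_top ENNReal.ofReal_ne_top (measure_ne_top P _)),
    ENNReal.toReal_mul, ENNReal.toReal_ofReal hp0.le, ENNReal.toReal_ofReal (by linarith)]

end
end
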